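/- arXiv:2005.04427 — 3 statements merged into one kernel-verified Lean document; each statement's English description precedes it below -/
import Mathlib

section
/- Let n ≥ 1 and T ≥ n be integers, let U, Y be real data sequences of length T+1 with Σ_{U,Y} nonempty, and let σ ∈ ℂ. Suppose the two rank conditions hold: rank [H_n(U), 0, γ_n(σ); H_n(Y), γ_n(σ), 0] = rank [H_n(U), 0; H_n(Y), γ_n(σ)] and rank [H_n(U), 0; H_n(Y), γ_n(σ)] = rank [H_n(U); H_n(Y)] + 1. Then for any solution (ξ, M) ∈ ℂ^{T−n+1} × ℂ of the linear system H_n(U)·ξ = γ_n(σ), H_n(Y)·ξ = M·γ_n(σ), one has Σ_{U,Y} ⊆ Σ_{σ,M}, and this M is the unique complex number with that property. -/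
/-!
Write `θ = [q -p]` as the vector `v = [q, -p, -1]`. Then `θ ∈ Σ_{U,Y}` says `v · S = 0` for the
stacked Hankel matrix `S = [H_n(U); H_n(Y)]`, and `θ ∈ Σ_{σ,M}` says
`v · (γ_n(σ); M γ_n(σ)) = 0`. Given `S ξ = (γ_n(σ); M γ_n(σ))`, the inclusion is
`v · (S ξ) = (v · S) · ξ = 0`.

If some `M' ≠ M` also works, subtracting the two identities gives `v · (0; γ_n(σ)) = 0` for all
these `v`. They form the affine slice `{v_last = -1}` of the real left kernel of `S`, which is
nonempty and hence spans that kernel; since `S` is real, real and imaginary parts extend the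
identity to its complex left kernel. So `(0; γ_n(σ))` is in the column space of `S`, and
appending it does not raise the rank, contradicting the second rank condition.
-/

open Matrix

/-- The Hankel matrix of depth `n` (over `ℂ`) of a real data sequence `u = (u 0, …, u T)`:
its `(i,j)` entry is `u (i+j)`. -/
noncomputable def hankelC (u : ℕ → ℝ) (n T : ℕ) : Matrix (Fin (n + 1)) (Fin (T - n + 1)) ℂ :=
  fun i j => (u ((i : ℕ) + (j : ℕ)) : ℂ)

/-- `γ_n(σ) = (1, σ, …, σ^n)ᵀ`. -/
noncomputable def gammaVec (n : ℕ) (σ : ℂ) : Fin (n + 1) → ℂ :=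
  fun i => σ ^ (i : ℕ)

/-- A parameter row vector `θ = [q, -p] ∈ ℝ^{2n+1}` belongs to `Σ_{U,Y}`, i.e.
`[q -p]·[H_n(U); H̄_n(Y)] = [y_n ⋯ y_T]`. -/
def inSigmaUY (n T : ℕ) (u y : ℕ → ℝ) (θ : Fin (2 * n + 1) → ℝ) : Prop :=
  ∀ j : Fin (T - n + 1),
    (∑ i : Fin (2 * n + 1),
      θ i * (if (i : ℕ) < n + 1 then u ((i : ℕ) + (j : ℕ))
             else y ((i : ℕ) - (n + 1) + (j : ℕ)))) = y (n + (j : ℕ))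

/-- A parameter row vector `θ = [q, -p] ∈ ℝ^{2n+1}` belongs to `Σ_{σ,M}`, i.e.
`[q -p]·[γ_n(σ); M·γ_{n-1}(σ)] = M·σ^n`. -/
def inSigmaM (n : ℕ) (σ M : ℂ) (θ : Fin (2 * n + 1) → ℝ) : Prop :=
  (∑ i : Fin (2 * n + 1),
    (θ i : ℂ) * (if (i : ℕ) < n + 1 then σ ^ (i : ℕ)
                 else M * σ ^ ((i : ℕ) - (n + 1)))) = M * σ ^ n

/-- The stacked matrix `[H_n(U); H_n(Y)]` over `ℂ`. -/
noncomputable def stackUY (u y : ℕ → ℝ) (n T : ℕ) :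
    Matrix (Fin (n + 1) ⊕ Fin (n + 1)) (Fin (T - n + 1)) ℂ :=
  Matrix.fromRows (hankelC u n T) (hankelC y n T)

/-- The column `(0; γ_n(σ))`. -/
noncomputable def colZeroGamma (n : ℕ) (σ : ℂ) :
    Matrix (Fin (n + 1) ⊕ Fin (n + 1)) (Fin 1) ℂ :=
  Matrix.of fun i _ => Sum.elim (fun _ : Fin (n + 1) => (0 : ℂ)) (fun k : Fin (n + 1) => σ ^ (k : ℕ)) i

/-- The column `(γ_n(σ); 0)`. -/
noncomputable def colGammaZero (n : ℕ) (σ : ℂ) :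
    Matrix (Fin (n + 1) ⊕ Fin (n + 1)) (Fin 1) ℂ :=
  Matrix.of fun i _ => Sum.elim (fun k : Fin (n + 1) => σ ^ (k : ℕ)) (fun _ : Fin (n + 1) => (0 : ℂ)) i

theorem Matrix.mem_range_mulVecLin_of_forall_vecMul_eq_zero {K m k : Type*} [Field K] [Fintype m]
    [Fintype k] (A : Matrix m k K) {c : m → K}
    (h : ∀ w : m → K, w ᵥ* A = 0 → w ⬝ᵥ c = 0) : c ∈ LinearMap.range A.mulVecLin := by
  classical
  by_contra hc
  obtain ⟨f, hfc, hf⟩ := Submodule.exists_dual_map_eq_bot_of_notMem hc inferInstance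
  obtain ⟨w, rfl⟩ := (dotProductEquiv K m).surjective f
  refine hfc (h w (funext fun j => ?_))
  have hcol : dotProductEquiv K m w (A *ᵥ Pi.single j 1) ∈
      (LinearMap.range A.mulVecLin).map (dotProductEquiv K m w) :=
    Submodule.mem_map_of_mem (LinearMap.mem_range_self A.mulVecLin _)
  rw [hf, Submodule.mem_bot] at hcol
  simp only [dotProductEquiv_apply_apply, dotProduct_mulVec, dotProduct_single, mul_one] at hcol
  exact hcol

theorem Matrix.rank_fromCols_of_forall_mem_range {K m k k' : Type*} [Field K] [Fintype m]
    [Fintype k] [Fintype k'] (B : Matrix m k K) (C : Matrix m k' K)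
    (hC : ∀ j, C.col j ∈ LinearMap.range B.mulVecLin) : (fromCols B C).rank = B.rank := by
  have hle : Submodule.span K (Set.range C.col) ≤ Submodule.span K (Set.range B.col) := by
    rw [Submodule.span_le, ← range_mulVecLin]
    rintro _ ⟨j, rfl⟩
    exact hC j
  have hcol : (fromCols B C).col = Sum.elim B.col C.col := by
    ext (j | j) i <;> rfl
  rw [rank, rank, range_mulVecLin, range_mulVecLin, hcol, Set.Sum.elim_range,
    Submodule.span_union, sup_eq_left.mpr hle]

theorem LinearMap.map_eq_zero_of_map_eq_zero_on_level_set {K V W : Type*} [Field K]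
    [AddCommGroup V] [Module K V] [AddCommGroup W] [Module K W] {L : Submodule K V}
    {e : V →ₗ[K] K} {f : V →ₗ[K] W} {c : K} (hc : c ≠ 0) {x₀ : V} (hx₀ : x₀ ∈ L)
    (hex₀ : e x₀ = c) (hf : ∀ x ∈ L, e x = c → f x = 0) {x : V} (hx : x ∈ L) : f x = 0 := by
  have hfx₀ : f x₀ = 0 := hf x₀ hx₀ hex₀
  have hshift := hf (x₀ + x - (c⁻¹ * e x) • x₀)
    (L.sub_mem (L.add_mem hx₀ hx) (L.smul_mem _ hx₀)) (by simp [hex₀]; field_simp; ring)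
  simpa [hfx₀] using hshift

theorem Matrix.dotProduct_eq_zero_of_vecMul_map_ofReal_eq_zero {m k : Type*} [Fintype m]
    (A : Matrix m k ℝ) {c : m → ℂ}
    (h : ∀ w : m → ℝ, w ᵥ* A = 0 → Fintype.linearCombination ℝ c w = 0) {w : m → ℂ}
    (hw : w ᵥ* A.map (↑) = 0) : w ⬝ᵥ c = 0 := by
  have hre : (fun i => (w i).re) ᵥ* A = 0 := funext fun j => by
    simpa [vecMul, dotProduct, Complex.re_sum] using congrArg Complex.re (congrFun hw j)
  have him : (fun i => (w i).im) ᵥ* A = 0 := funext fun j => by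
    simpa [vecMul, dotProduct, Complex.im_sum] using congrArg Complex.im (congrFun hw j)
  calc w ⬝ᵥ c = Fintype.linearCombination ℝ c (fun i => (w i).re)
        + Complex.I * Fintype.linearCombination ℝ c (fun i => (w i).im) := by
        simp only [Fintype.linearCombination_apply, Complex.real_smul, dotProduct, Finset.mul_sum,
          ← Finset.sum_add_distrib]
        refine Finset.sum_congr rfl fun i _ => ?_
        linear_combination c i * (Complex.re_add_im (w i)).symm
    _ = 0 := by rw [h _ hre, h _ him, mul_zero, add_zero]

theorem Fintype.linearCombination_mulVec_map_ofReal {m k : Type*} [Fintype m] [Fintype k]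
    (A : Matrix m k ℝ) (v : m → ℝ) (ξ : k → ℂ) :
    Fintype.linearCombination ℝ (A.map (↑) *ᵥ ξ) v = ((↑) ∘ (v ᵥ* A)) ⬝ᵥ ξ := by
  have hv : ((↑) ∘ v) ᵥ* A.map (↑) = ((↑) ∘ (v ᵥ* A) : k → ℂ) :=
    funext fun j => (Complex.ofRealHom.map_vecMul A v j).symm
  rw [← hv, ← dotProduct_mulVec, Fintype.linearCombination_apply]
  simp [dotProduct, Complex.real_smul]

theorem Fintype.linearCombination_sumElim_smul {R A m m' : Type*} [CommSemiring R]
    [CommSemiring A] [Algebra R A] [Fintype m] [Fintype m'] (a : m → A) (b : m' → A) (M : A)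
    (v : m ⊕ m' → R) :
    Fintype.linearCombination R (Sum.elim a (M • b)) v =
      Fintype.linearCombination R (Sum.elim a 0) v
        + M * Fintype.linearCombination R (Sum.elim 0 b) v := by
  simp [Fintype.linearCombination_apply, Fintype.sum_sum_type, Finset.mul_sum]

def realHankel (u : ℕ → ℝ) (n T : ℕ) : Matrix (Fin (n + 1)) (Fin (T - n + 1)) ℝ :=
  of fun i j => u ((i : ℕ) + (j : ℕ))

def realStackUY (u y : ℕ → ℝ) (n T : ℕ) :
    Matrix (Fin (n + 1) ⊕ Fin (n + 1)) (Fin (T - n + 1)) ℝ :=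
  fromRows (realHankel u n T) (realHankel y n T)

theorem stackUY_eq_map (u y : ℕ → ℝ) (n T : ℕ) :
    stackUY u y n T = (realStackUY u y n T).map (↑) := by
  rw [stackUY, realStackUY, fromRows_map]
  rfl

/-- `θ = [q -p]` as the left multiplier `[q, -p, -1]` of `[H_n(U); H_n(Y)]`. -/
def extendParam (n : ℕ) (θ : Fin (2 * n + 1) → ℝ) : Fin (n + 1) ⊕ Fin (n + 1) → ℝ :=
  Sum.elim (fun i => θ ⟨i, by omega⟩) (Fin.snoc (fun k : Fin n => θ ⟨n + 1 + k, by omega⟩) (-1))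

theorem extendParam_inr_last (n : ℕ) (θ : Fin (2 * n + 1) → ℝ) :
    extendParam n θ (Sum.inr (Fin.last n)) = -1 := by
  simp [extendParam]

theorem exists_extendParam_eq {n : ℕ} {w : Fin (n + 1) ⊕ Fin (n + 1) → ℝ}
    (hw : w (Sum.inr (Fin.last n)) = -1) : ∃ θ, extendParam n θ = w := by
  refine ⟨fun i => if h : (i : ℕ) < n + 1 then w (Sum.inl ⟨i, h⟩)
    else w (Sum.inr ⟨i - (n + 1), by omega⟩), ?_⟩
  ext (i | i)
  · simp only [extendParam, Sum.elim_inl, dif_pos i.isLt]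
  · induction i using Fin.lastCases with
    | last => simp [extendParam, hw]
    | cast k =>
      simp only [extendParam, Sum.elim_inr, Fin.snoc_castSucc,
        dif_neg (by omega : ¬n + 1 + k < n + 1)]
      congr 2
      ext
      simp

theorem Fin.sum_univ_two_mul_add_one {M : Type*} [AddCommMonoid M] (n : ℕ)
    (f : Fin (2 * n + 1) → M) :
    ∑ i, f i = ∑ i : Fin (n + 1), f ⟨i, by omega⟩ + ∑ k : Fin n, f ⟨n + 1 + k, by omega⟩ := by
  rw [← Fin.sum_congr' f (by omega : n + 1 + n = 2 * n + 1), Fin.sum_univ_add]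
  rfl

theorem sum_extendParam_smul {R : Type*} [AddCommGroup R] [Module ℝ R] (n : ℕ)
    (θ : Fin (2 * n + 1) → ℝ) (a b : ℕ → R) :
    ∑ s, extendParam n θ s • Sum.elim (fun i : Fin (n + 1) => a i) (fun i : Fin (n + 1) => b i) s =
      ∑ i : Fin (2 * n + 1), θ i • (if (i : ℕ) < n + 1 then a i else b (i - (n + 1))) - b n := by
  simp only [Fintype.sum_sum_type, Sum.elim_inl, Sum.elim_inr]
  rw [Fin.sum_univ_castSucc (fun i : Fin (n + 1) => extendParam n θ (Sum.inr i) • b i),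
    Fin.sum_univ_two_mul_add_one]
  have hlt : ∀ i : Fin (n + 1), (i : ℕ) < n + 1 := fun i => i.isLt
  have hge : ∀ k : Fin n, ¬n + 1 + (k : ℕ) < n + 1 := fun k => by omega
  simp [extendParam, hlt, hge]
  abel

theorem inSigmaUY_iff (n T : ℕ) (u y : ℕ → ℝ) (θ : Fin (2 * n + 1) → ℝ) :
    inSigmaUY n T u y θ ↔ extendParam n θ ᵥ* realStackUY u y n T = 0 := by
  rw [inSigmaUY, funext_iff]
  refine forall_congr' fun j => ?_
  have h := sum_extendParam_smul n θ (fun m => u (m + j)) (fun m => y (m + j))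
  simp only [smul_eq_mul] at h
  rw [Pi.zero_apply, vecMul, dotProduct, ← sub_eq_zero]
  convert Iff.rfl using 2
  rw [← h]
  refine Fintype.sum_congr _ _ fun s => ?_
  rcases s with i | i <;> rfl

theorem inSigmaM_iff (n : ℕ) (σ M : ℂ) (θ : Fin (2 * n + 1) → ℝ) :
    inSigmaM n σ M θ ↔
      Fintype.linearCombination ℝ (Sum.elim (gammaVec n σ) (M • gammaVec n σ)) (extendParam n θ)
        = 0 := by
  have h := sum_extendParam_smul n θ (fun m => σ ^ m) (fun m => M * σ ^ m)
  simp only [Complex.real_smul] at h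
  rw [inSigmaM, ← sub_eq_zero, ← h, Fintype.linearCombination_apply]
  simp only [Complex.real_smul]
  rfl

theorem linearCombination_eq_zero_of_vecMul_realStackUY_eq_zero {n T : ℕ} {u y : ℕ → ℝ}
    (hne : ∃ θ, inSigmaUY n T u y θ) {c : Fin (n + 1) ⊕ Fin (n + 1) → ℂ}
    (hc : ∀ θ, inSigmaUY n T u y θ → Fintype.linearCombination ℝ c (extendParam n θ) = 0)
    {w : Fin (n + 1) ⊕ Fin (n + 1) → ℝ} (hw : w ᵥ* realStackUY u y n T = 0) :
    Fintype.linearCombination ℝ c w = 0 := by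
  obtain ⟨θ₀, hθ₀⟩ := hne
  refine LinearMap.map_eq_zero_of_map_eq_zero_on_level_set
    (L := LinearMap.ker (realStackUY u y n T).vecMulLinear)
    (e := LinearMap.proj (Sum.inr (Fin.last n))) (neg_ne_zero.2 one_ne_zero)
    ((inSigmaUY_iff n T u y θ₀).1 hθ₀) (extendParam_inr_last n θ₀) (fun x hx hxe => ?_) hw
  obtain ⟨θ, rfl⟩ := exists_extendParam_eq hxe
  exact hc θ ((inSigmaUY_iff n T u y θ).2 hx)

theorem inSigmaM_of_mulVec_eq {n T : ℕ} {u y : ℕ → ℝ} {σ M : ℂ} {ξ : Fin (T - n + 1) → ℂ}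
    (hU : hankelC u n T *ᵥ ξ = gammaVec n σ) (hY : hankelC y n T *ᵥ ξ = M • gammaVec n σ)
    {θ : Fin (2 * n + 1) → ℝ} (hθ : inSigmaUY n T u y θ) : inSigmaM n σ M θ := by
  rw [inSigmaM_iff, ← hY, ← hU, ← fromRows_mulVec, ← stackUY, stackUY_eq_map,
    Fintype.linearCombination_mulVec_map_ofReal, (inSigmaUY_iff n T u y θ).1 hθ]
  simp

theorem linearCombination_sumElim_zero_gammaVec_eq_zero {n : ℕ} {σ M M' : ℂ} (hMM : M' ≠ M)
    {θ : Fin (2 * n + 1) → ℝ} (h : inSigmaM n σ M θ) (h' : inSigmaM n σ M' θ) :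
    Fintype.linearCombination ℝ (Sum.elim 0 (gammaVec n σ)) (extendParam n θ) = 0 := by
  rw [inSigmaM_iff, Fintype.linearCombination_sumElim_smul] at h h'
  refine (mul_eq_zero.1 ?_).resolve_left (sub_ne_zero.2 hMM)
  linear_combination h' - h

theorem unique_value_from_solution_general (n T : ℕ)
    (u y : ℕ → ℝ) (σ : ℂ)
    (hne : ∃ θ : Fin (2 * n + 1) → ℝ, inSigmaUY n T u y θ)
    (hrank2 : (Matrix.fromCols (stackUY u y n T) (colZeroGamma n σ)).rank =
        (stackUY u y n T).rank + 1) :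
    ∀ (ξ : Fin (T - n + 1) → ℂ) (M : ℂ),
      (hankelC u n T).mulVec ξ = gammaVec n σ →
      (hankelC y n T).mulVec ξ = M • gammaVec n σ →
      (∀ θ : Fin (2 * n + 1) → ℝ, inSigmaUY n T u y θ → inSigmaM n σ M θ) ∧
      (∀ M' : ℂ,
        (∀ θ : Fin (2 * n + 1) → ℝ, inSigmaUY n T u y θ → inSigmaM n σ M' θ) → M' = M) := by
  intro ξ M hU hY
  refine ⟨fun θ => inSigmaM_of_mulVec_eq hU hY, fun M' hM' => by_contra fun hMM => ?_⟩
  have hcol : Sum.elim (0 : Fin (n + 1) → ℂ) (gammaVec n σ) ∈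
      LinearMap.range (stackUY u y n T).mulVecLin :=
    mem_range_mulVecLin_of_forall_vecMul_eq_zero _ fun w hw =>
      dotProduct_eq_zero_of_vecMul_map_ofReal_eq_zero _
        (fun _ => linearCombination_eq_zero_of_vecMul_realStackUY_eq_zero hne fun θ hθ =>
          linearCombination_sumElim_zero_gammaVec_eq_zero hMM
            (inSigmaM_of_mulVec_eq hU hY hθ) (hM' θ hθ))
        (stackUY_eq_map u y n T ▸ hw)
  have hrank := rank_fromCols_of_forall_mem_range _ (colZeroGamma n σ) fun _ => hcol
  omega

/-- Under the two rank conditions (and nonemptiness of `Σ_{U,Y}`),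
any solution `(ξ, M)` of `H_n(U)·ξ = γ_n(σ)`, `H_n(Y)·ξ = M·γ_n(σ)` yields
`Σ_{U,Y} ⊆ Σ_{σ,M}`, and this `M` is the unique complex number with that property. -/
theorem unique_value_from_solution (n T : ℕ) (hn : 1 ≤ n) (hT : n ≤ T)
    (u y : ℕ → ℝ) (σ : ℂ)
    (hne : ∃ θ : Fin (2 * n + 1) → ℝ, inSigmaUY n T u y θ)
    (hrank1 : (Matrix.fromCols (Matrix.fromCols (stackUY u y n T) (colZeroGamma n σ))
          (colGammaZero n σ)).rank =
        (Matrix.fromCols (stackUY u y n T) (colZeroGamma n σ)).rank)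
    (hrank2 : (Matrix.fromCols (stackUY u y n T) (colZeroGamma n σ)).rank =
        (stackUY u y n T).rank + 1) :
    ∀ (ξ : Fin (T - n + 1) → ℂ) (M : ℂ),
      (hankelC u n T).mulVec ξ = gammaVec n σ →
      (hankelC y n T).mulVec ξ = M • gammaVec n σ →
      (∀ θ : Fin (2 * n + 1) → ℝ, inSigmaUY n T u y θ → inSigmaM n σ M θ) ∧
      (∀ M' : ℂ,
        (∀ θ : Fin (2 * n + 1) → ℝ, inSigmaUY n T u y θ → inSigmaM n σ M' θ) → M' = M) :=
  unique_value_from_solution_general n T u y σ hne hrank2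
end

section
/- Let n ≥ 1 and T ≥ n be integers, let U, Y be real data sequences of length T+1, let σ ∈ ℂ, and suppose the linear system H_n(U)·ξ = γ_n(σ), H_n(Y)·ξ = M·γ_n(σ) has at least one solution (ξ, M) ∈ ℂ^{T−n+1} × ℂ. Then any two solutions (ξ₁, M₁) and (ξ₂, M₂) of this system satisfy M₁ = M₂ if and only if rank [H_n(U), 0; H_n(Y), γ_n(σ)] = rank [H_n(U); H_n(Y)] + 1, where ranks are of complex matrices. -/
/-!
The solutions `(ξ, M)` of `H_n(U) ξ = γ`, `H_n(Y) ξ = M γ` form an affine space whose direction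
consists of the pairs `(η, m)` with `H_n(U) η = 0`, `H_n(Y) η = m γ`. So `M` is determined iff no
`η` solves `H_n(U) η = 0`, `H_n(Y) η = γ`, i.e. iff the column `(0; γ)` lies outside the column
space of `[H_n(U); H_n(Y)]`, which is exactly when adjoining it raises the rank by one.
-/

open Matrix

namespace Matrix

variable {m m₁ m₂ n ι K : Type*} [Fintype n]

theorem range_mulVecLin_fromCols [CommSemiring K] [Fintype ι] (A : Matrix m n K)
    (B : Matrix m ι K) :
    LinearMap.range (fromCols A B).mulVecLin =
      LinearMap.range A.mulVecLin ⊔ LinearMap.range B.mulVecLin := by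
  simp only [range_mulVecLin, ← Submodule.span_union, ← Set.Sum.elim_range]
  congr 2
  funext j
  cases j <;> rfl

theorem range_mulVecLin_replicateCol [CommSemiring K] [Fintype ι] [Nonempty ι] (v : m → K) :
    LinearMap.range (replicateCol ι v).mulVecLin = Submodule.span K {v} := by
  rw [range_mulVecLin]
  exact congrArg _ (Set.range_const (c := v))

theorem rank_fromCols_replicateCol_eq_rank_add_one_iff [Field K] [Fintype m] [Fintype ι]
    [Nonempty ι] (A : Matrix m n K) (v : m → K) :
    (fromCols A (replicateCol ι v)).rank = A.rank + 1 ↔ v ∉ LinearMap.range A.mulVecLin := by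
  rw [rank, range_mulVecLin_fromCols, range_mulVecLin_replicateCol]
  by_cases hv : v ∈ LinearMap.range A.mulVecLin
  · rw [sup_eq_left.mpr ((Submodule.span_singleton_le_iff_mem _ _).mpr hv)]
    simp [hv, rank]
  · simp [hv, Submodule.finrank_sup_span_singleton hv, rank]

theorem sumElim_zero_mem_range_mulVecLin_fromRows_iff [CommSemiring K] (P : Matrix m₁ n K)
    (Q : Matrix m₂ n K) (g : m₂ → K) :
    Sum.elim (0 : m₁ → K) g ∈ LinearMap.range (fromRows P Q).mulVecLin ↔
      ∃ η, P *ᵥ η = 0 ∧ Q *ᵥ η = g := by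
  simp [fromRows_mulVec, Sum.elim_eq_iff]

theorem scalar_unique_iff_not_exists_mulVec_eq_zero_and_eq [Field K] {P Q : Matrix m n K}
    {g : m → K} (hsol : ∃ (ξ : n → K) (M : K), P *ᵥ ξ = g ∧ Q *ᵥ ξ = M • g) :
    (∀ (ξ₁ ξ₂ : n → K) (M₁ M₂ : K), P *ᵥ ξ₁ = g → Q *ᵥ ξ₁ = M₁ • g →
        P *ᵥ ξ₂ = g → Q *ᵥ ξ₂ = M₂ • g → M₁ = M₂) ↔
      ¬ ∃ η, P *ᵥ η = 0 ∧ Q *ᵥ η = g := by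
  constructor
  · rintro huniq ⟨η, hPη, hQη⟩
    obtain ⟨ξ, M, hPξ, hQξ⟩ := hsol
    have hP : P *ᵥ (ξ + η) = g := by rw [mulVec_add, hPξ, hPη, add_zero]
    have hQ : Q *ᵥ (ξ + η) = (M + 1) • g := by rw [mulVec_add, hQξ, hQη, add_smul, one_smul]
    simpa using huniq ξ (ξ + η) M (M + 1) hPξ hQξ hP hQ
  · intro hno ξ₁ ξ₂ M₁ M₂ hP₁ hQ₁ hP₂ hQ₂
    by_contra hne
    have hd : M₁ - M₂ ≠ 0 := sub_ne_zero.mpr hne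
    refine hno ⟨(M₁ - M₂)⁻¹ • (ξ₁ - ξ₂), ?_, ?_⟩
    · rw [mulVec_smul, mulVec_sub, hP₁, hP₂, sub_self, smul_zero]
    · rw [mulVec_smul, mulVec_sub, hQ₁, hQ₂, ← sub_smul, smul_smul, inv_mul_cancel₀ hd,
        one_smul]

end Matrix

theorem colZeroGamma_eq_replicateCol (n : ℕ) (σ : ℂ) :
    colZeroGamma n σ = replicateCol (Fin 1) (Sum.elim 0 (gammaVec n σ)) :=
  rfl

theorem unique_M_iff_rank_condition_general (n T : ℕ)
    (u y : ℕ → ℝ) (σ : ℂ)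
    (hsol : ∃ (ξ : Fin (T - n + 1) → ℂ) (M : ℂ),
        (hankelC u n T).mulVec ξ = gammaVec n σ ∧
        (hankelC y n T).mulVec ξ = M • gammaVec n σ) :
    (∀ (ξ₁ ξ₂ : Fin (T - n + 1) → ℂ) (M₁ M₂ : ℂ),
        (hankelC u n T).mulVec ξ₁ = gammaVec n σ →
        (hankelC y n T).mulVec ξ₁ = M₁ • gammaVec n σ →
        (hankelC u n T).mulVec ξ₂ = gammaVec n σ →
        (hankelC y n T).mulVec ξ₂ = M₂ • gammaVec n σ →
        M₁ = M₂) ↔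
      (Matrix.fromCols (stackUY u y n T) (colZeroGamma n σ)).rank =
        (stackUY u y n T).rank + 1 := by
  rw [scalar_unique_iff_not_exists_mulVec_eq_zero_and_eq hsol, colZeroGamma_eq_replicateCol,
    rank_fromCols_replicateCol_eq_rank_add_one_iff, stackUY,
    sumElim_zero_mem_range_mulVecLin_fromRows_iff]

/-- Given at least one solution `(ξ, M)` of the linear system
`H_n(U)·ξ = γ_n(σ)`, `H_n(Y)·ξ = M·γ_n(σ)`, all solutions share the same `M`-component
iff `rank [H_n(U), 0; H_n(Y), γ_n(σ)] = rank [H_n(U); H_n(Y)] + 1`. -/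
theorem unique_M_iff_rank_condition (n T : ℕ) (hn : 1 ≤ n) (hT : n ≤ T)
    (u y : ℕ → ℝ) (σ : ℂ)
    (hsol : ∃ (ξ : Fin (T - n + 1) → ℂ) (M : ℂ),
        (hankelC u n T).mulVec ξ = gammaVec n σ ∧
        (hankelC y n T).mulVec ξ = M • gammaVec n σ) :
    (∀ (ξ₁ ξ₂ : Fin (T - n + 1) → ℂ) (M₁ M₂ : ℂ),
        (hankelC u n T).mulVec ξ₁ = gammaVec n σ →
        (hankelC y n T).mulVec ξ₁ = M₁ • gammaVec n σ →
        (hankelC u n T).mulVec ξ₂ = gammaVec n σ →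
        (hankelC y n T).mulVec ξ₂ = M₂ • gammaVec n σ →
        M₁ = M₂) ↔
      (Matrix.fromCols (stackUY u y n T) (colZeroGamma n σ)).rank =
        (stackUY u y n T).rank + 1 :=
  unique_M_iff_rank_condition_general n T u y σ hsol
end

section
/- Let F be a field, let A ∈ F^{k×m} and b ∈ F^{1×m}, and suppose the affine solution set S = { x ∈ F^{1×k} : x·A = b } is nonempty. Let v ∈ F^{k} and μ ∈ F. Then S ⊆ { x ∈ F^{1×k} : x·v = μ } if and only if there exists ξ ∈ F^{m} with A·ξ = v and b·ξ = μ. -/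
/-!
Translating a solution `x₀ ∈ S` by any `y` with `y·A = 0` stays in `S`, so the inclusion
forces `y·v = 0` on the left kernel of `A`; by the Fredholm alternative `v = A·ξ` for some `ξ`,
and then `b·ξ = x₀·A·ξ = x₀·v = μ`.
-/

open Matrix

theorem Matrix.exists_mulVec_eq_iff_forall_vecMul_eq_zero {K ι κ : Type*} [Field K]
    [Fintype ι] [Fintype κ] (A : Matrix ι κ K) (v : ι → K) :
    (∃ ξ, A *ᵥ ξ = v) ↔ ∀ y, y ᵥ* A = 0 → y ⬝ᵥ v = 0 := by
  classical
  refine ⟨fun ⟨ξ, hξ⟩ y hy ↦ by rw [← hξ, dotProduct_mulVec, hy, zero_dotProduct], fun h ↦ ?_⟩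
  by_contra hv
  obtain ⟨f, hfv, hf⟩ := Submodule.exists_dual_map_eq_bot_of_notMem
    (p := LinearMap.range A.mulVecLin) (x := v) (by simpa using hv) inferInstance
  set y := (dotProductEquiv K ι).symm f
  have hfy : ∀ w, f w = y ⬝ᵥ w := fun w ↦ by
    rw [← dotProductEquiv_apply_apply, LinearEquiv.apply_symm_apply]
  have hyA : y ᵥ* A = 0 := dotProduct_eq_zero _ fun ξ ↦ by
    rw [← dotProduct_mulVec, ← hfy]
    exact (Submodule.eq_bot_iff _).mp hf _
      (Submodule.mem_map_of_mem (LinearMap.mem_range_self _ ξ))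
  exact hfv (by rw [hfy, h y hyA])


/-- Let `F` be a field, `A ∈ F^{k×m}`, `b ∈ F^{1×m}`, and suppose the
affine solution set `S = {x ∈ F^{1×k} : x·A = b}` is nonempty. Then `S` is contained in
`{x : x·v = μ}` iff there exists `ξ ∈ F^m` with `A·ξ = v` and `b·ξ = μ`. -/
theorem affine_inclusion_iff {F : Type*} [Field F] {k m : ℕ}
    (A : Matrix (Fin k) (Fin m) F) (b : Fin m → F)
    (hne : ∃ x : Fin k → F, Matrix.vecMul x A = b)
    (v : Fin k → F) (μ : F) :
    (∀ x : Fin k → F, Matrix.vecMul x A = b → dotProduct x v = μ) ↔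
      ∃ ξ : Fin m → F, A.mulVec ξ = v ∧ dotProduct b ξ = μ := by
  obtain ⟨x₀, hx₀⟩ := hne
  constructor
  · intro h
    have hker : ∀ y, y ᵥ* A = 0 → y ⬝ᵥ v = 0 := fun y hy ↦ by
      have hshift := h (x₀ + y) (by rw [add_vecMul, hx₀, hy, add_zero])
      rwa [add_dotProduct, h x₀ hx₀, add_eq_left] at hshift
    obtain ⟨ξ, hξ⟩ := (A.exists_mulVec_eq_iff_forall_vecMul_eq_zero v).mpr hker
    refine ⟨ξ, hξ, ?_⟩
    rw [← hx₀, ← dotProduct_mulVec, hξ, h x₀ hx₀]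
  · rintro ⟨ξ, hξ, hbξ⟩ x hx
    rw [← hξ, dotProduct_mulVec, hx, hbξ]
end
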